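/- Every S-Motzkin path of length 3n with n ≥ 1 admits a unique decomposition of the form B₁ · A · H · B₂ · U · C · D, where A and C are S-Motzkin paths, B = B₁ · B₂ is an S-Motzkin path, and B₁ is the prefix of B ending at its last U step (empty if B has no U step). -/
import Mathlib

/-- The three step types of a Motzkin path: H = (1,0), U = (1,1), D = (1,-1). -/
inductive Step : Type | H | U | D
deriving DecidableEq, Repr

/-- An S-Motzkin path (prefix characterization, any length): equal numbers of each
letter and every prefix p satisfies #D(p) ≤ #U(p) ≤ #H(p) ≤ #U(p) + 1. -/
def SMP (w : List Step) : Prop :=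
  w.count Step.H = w.count Step.U ∧ w.count Step.U = w.count Step.D ∧
  ∀ p : List Step, p <+: w →
    p.count Step.D ≤ p.count Step.U ∧ p.count Step.U ≤ p.count Step.H ∧
      p.count Step.H ≤ p.count Step.U + 1

namespace SMPaux

/-- Before a U, the H-count exceeds the U-count by exactly one. -/
lemma before_U {w p : List Step} (hw : SMP w) (hp : p ++ [Step.U] <+: w) :
    p.count Step.H = p.count Step.U + 1 := by
  have h1 := hw.2.2 p ((List.prefix_append p [Step.U]).trans hp)
  have h2 := hw.2.2 _ hp
  simp [List.count_append, List.count_singleton] at h2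
  omega

/-- A prefix ending in U has equal H and U counts. -/
lemma end_U {w p : List Step} (hw : SMP w) (hp : p ++ [Step.U] <+: w) :
    (p ++ [Step.U]).count Step.H = (p ++ [Step.U]).count Step.U := by
  have := before_U hw hp
  simp [List.count_append, List.count_singleton]
  omega

/-- A nonempty S-Motzkin path ends with D. -/
lemma last_D {w : List Step} (hw : SMP w) (hne : w ≠ []) :
    ∃ w', w = w' ++ [Step.D] := by
  rcases List.eq_nil_or_concat w with h | ⟨L, b, h⟩
  · exact absurd h hne
  rw [List.concat_eq_append] at h
  have hL : L <+: w := ⟨[b], h.symm⟩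
  have h1 := hw.2.2 L hL
  have h2 := hw.1
  have h3 := hw.2.1
  cases b with
  | H => rw [h] at h2 h3; simp [List.count_append, List.count_singleton] at h2 h3; omega
  | U => rw [h] at h2 h3; simp [List.count_append, List.count_singleton] at h2 h3; omega
  | D => exact ⟨L, h⟩

lemma first_split {x : Step} {l : List Step} (h : x ∈ l) :
    ∃ s t, l = s ++ x :: t ∧ x ∉ s := by
  induction l with
  | nil => simp at h
  | cons y ys ih =>
    by_cases hxy : x = y
    · exact ⟨[], ys, by simp [hxy], by simp⟩
    · have hx : x ∈ ys := by
        rcases List.mem_cons.mp h with h1 | h1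
        · exact absurd h1 hxy
        · exact h1
      obtain ⟨s, t, rfl, hxs⟩ := ih hx
      exact ⟨y :: s, t, by simp, by simp [hxs, hxy]⟩

lemma repl_cancel : ∀ (j j' : ℕ) (a b : List Step),
    List.replicate j Step.D ++ Step.H :: a = List.replicate j' Step.D ++ Step.H :: b →
    j = j' ∧ a = b := by
  intro j
  induction j with
  | zero =>
    intro j' a b h
    cases j' with
    | zero => simpa using h
    | succ k => simp [List.replicate_succ] at h
  | succ k ih =>
    intro j' a b h
    cases j' with
    | zero => simp [List.replicate_succ] at h
    | succ k' =>
      simp only [List.replicate_succ, List.cons_append, List.cons.injEq, true_and] at h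
      obtain ⟨h1, h2⟩ := ih k' a b h
      exact ⟨by omega, h2⟩

/-- Strip trailing D's from a list. -/
lemma strip_D (X : List Step) :
    ∃ Y j, X = Y ++ List.replicate j Step.D ∧ ∀ Z, Y ≠ Z ++ [Step.D] := by
  induction X using List.reverseRecOn with
  | nil => exact ⟨[], 0, by simp, fun Z h => by simp at h⟩
  | append_singleton X' x ih =>
    cases x with
    | D =>
      obtain ⟨Y, j, hX, hY⟩ := ih
      refine ⟨Y, j + 1, ?_, hY⟩
      rw [hX, List.replicate_succ']
      simp [List.append_assoc]
    | H =>
      refine ⟨X' ++ [Step.H], 0, by simp, fun Z h => ?_⟩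
      have := congrArg List.getLast? h
      simp at this
    | U =>
      refine ⟨X' ++ [Step.U], 0, by simp, fun Z h => ?_⟩
      have := congrArg List.getLast? h
      simp at this

lemma prefix_append_cases {p s t : List Step} (h : p <+: s ++ t) :
    p <+: s ∨ ∃ r, r <+: t ∧ p = s ++ r := by
  rcases le_or_gt p.length s.length with hle | hlt
  · exact Or.inl (List.prefix_of_prefix_length_le h (List.prefix_append s t) hle)
  · obtain ⟨r, rfl⟩ := List.prefix_of_prefix_length_le (List.prefix_append s t) h
      (by simpa using hlt.le)
    exact Or.inr ⟨r, (List.prefix_append_right_inj s).mp h, rfl⟩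

lemma prefix_repl {p : List Step} {j : ℕ} (h : p <+: List.replicate j Step.D) :
    p = List.replicate p.length Step.D ∧ p.length ≤ j := by
  constructor
  · refine List.eq_replicate_iff.mpr ⟨rfl, fun b hb => ?_⟩
    have := h.sublist.subset hb
    exact (List.eq_of_mem_replicate this)
  · simpa using h.length_le

/-- Uniqueness of the (B₁, A) split of Y. -/
lemma Ysplit_le {Y B₁ A B₁' A' : List Step} (h : Y = B₁ ++ A) (h' : Y = B₁' ++ A')
    (hA : SMP A) (hA' : SMP A')
    (hend' : B₁'.getLast? = some Step.U ∨ B₁' = []) : B₁'.length ≤ B₁.length := by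
  by_contra hlt
  push_neg at hlt
  have hp : B₁ <+: B₁' :=
    List.prefix_of_prefix_length_le ⟨A, h.symm⟩ ⟨A', h'.symm⟩ hlt.le
  obtain ⟨P, rfl⟩ := hp
  have hPne : P ≠ [] := by
    intro hP; rw [hP] at hlt; simp at hlt
  have hAeq : A = P ++ A' := by
    rw [h'] at h
    rw [List.append_assoc] at h
    exact (List.append_cancel_left h).symm
  have hlastP : P.getLast? = some Step.U := by
    rcases hend' with h1 | h1
    · rw [← h1]
      exact (List.getLast?_append_of_ne_nil B₁ hPne).symm
    · exact absurd (List.append_eq_nil_iff.mp h1).2 hPne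
  obtain ⟨P₀, rfl⟩ : ∃ P₀, P = P₀ ++ [Step.U] := by
    rcases List.getLast?_eq_some_iff.mp hlastP with ⟨l', hl⟩
    exact ⟨l', hl⟩
  have hpref : P₀ <+: A := ⟨Step.U :: A', by rw [hAeq]; simp⟩
  have hP₀ := hA.2.2 P₀ hpref |>.1
  have c1 : A.count Step.U = A.count Step.D := hA.2.1
  have c2 : A'.count Step.U = A'.count Step.D := hA'.2.1
  rw [hAeq] at c1
  simp [List.count_append, List.count_singleton] at c1
  omega

end SMPaux

open SMPaux in
theorem smotzkin_unique_decomposition (w : List Step) (hw : SMP w) (hne : w ≠ []) :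
    ∃! q : List Step × List Step × List Step × List Step,
      SMP q.1 ∧ SMP q.2.2.2 ∧ SMP (q.2.1 ++ q.2.2.1) ∧
      Step.U ∉ q.2.2.1 ∧
      (q.2.1.getLast? = some Step.U ∨ q.2.1 = []) ∧
      w = q.2.1 ++ q.1 ++ Step.H :: (q.2.2.1 ++ Step.U :: (q.2.2.2 ++ [Step.D])) := by
  classical
  obtain ⟨w₀, hw₀⟩ := last_D hw hne
  set n := w.length with hn
  have hn1 : 1 ≤ n := by
    rw [hn, hw₀]; simp
  -- find the last internal return to the axis
  set Q : ℕ → Prop := fun i => (w.take i).count Step.U = (w.take i).count Step.D with hQdef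
  have hQ0 : Q 0 := by simp [hQdef]
  set m := Nat.findGreatest Q (n - 1) with hm
  have hQm : Q m := Nat.findGreatest_spec (Nat.zero_le _) hQ0
  have hmle : m ≤ n - 1 := Nat.findGreatest_le _
  have hmax : ∀ i, m < i → i ≤ n - 1 → ¬ Q i := fun i h1 h2 => Nat.findGreatest_is_greatest h1 h2
  set X := w.take m with hX
  have hXpre : X <+: w := List.take_prefix m w
  have hXlen : X.length = m := by
    rw [hX, List.length_take]; omega
  -- the step at position m
  have hdropne : w.drop m ≠ [] := by
    rw [← List.length_pos_iff_ne_nil, List.length_drop]; omega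
  obtain ⟨e, T', hT⟩ : ∃ e T', w.drop m = e :: T' := by
    cases hdrop : w.drop m with
    | nil => exact absurd hdrop hdropne
    | cons e T' => exact ⟨e, T', rfl⟩
  have hwXT : w = X ++ e :: T' := by
    rw [hX, ← hT, List.take_append_drop]
  have hXepre : X ++ [e] <+: w := ⟨T', by rw [hwXT]; simp⟩
  -- helper to convert prefixes to takes
  have htake : ∀ p : List Step, p <+: w → p = w.take p.length := fun p hp =>
    List.prefix_iff_eq_take.mp hp
  have heU : e = Step.U := by
    have hcond := hw.2.2 _ hXepre
    cases e with
    | D =>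
      exfalso
      simp [List.count_append, List.count_singleton] at hcond
      have : X.count Step.U = X.count Step.D := hQm
      omega
    | U => rfl
    | H =>
      exfalso
      -- then Q (m+1) would hold
      have hm1 : m + 1 ≤ n - 1 := by
        rcases Nat.lt_or_ge (m+1) n with h | h
        · omega
        · exfalso
          have hlen := congrArg List.length hwXT
          simp [← hn, hXlen] at hlen
          have hT'nil : T' = [] := by
            rw [← List.length_eq_zero_iff]
            omega
          rw [hT'nil] at hwXT
          rw [hwXT] at hw₀
          have h2 := congrArg List.getLast? hw₀
          simp at h2
      apply hmax (m+1) (by omega) hm1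
      have : w.take (m+1) = X ++ [Step.H] := by
        have h1 := htake _ hXepre
        simp [hXlen] at h1
        exact h1.symm
      show (w.take (m+1)).count Step.U = (w.take (m+1)).count Step.D
      rw [this]
      have hq : X.count Step.U = X.count Step.D := hQm
      simp [List.count_append, List.count_cons, List.count_nil]
      omega
  subst heU
  -- T' is nonempty and ends with D
  have hT'ne : T' ≠ [] := by
    intro h
    rw [h] at hwXT
    rw [hwXT] at hw₀
    have := congrArg List.getLast? hw₀
    simp at this
  obtain ⟨C, hC⟩ : ∃ C, T' = C ++ [Step.D] := by
    rcases List.eq_nil_or_concat T' with h | ⟨L, b, h⟩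
    · exact absurd h hT'ne
    rw [List.concat_eq_append] at h
    have hbD : b = Step.D := by
      rw [h] at hwXT
      rw [hwXT] at hw₀
      have h2 := congrArg List.getLast? hw₀
      rw [show X ++ Step.U :: (L ++ [b]) = (X ++ Step.U :: L) ++ [b] by simp] at h2
      simp only [List.getLast?_concat] at h2
      exact Option.some.inj h2
    exact ⟨L, by rw [h, hbD]⟩
  rw [hC] at hwXT
  -- now w = X ++ U :: (C ++ [D])
  have hwdec : w = X ++ Step.U :: (C ++ [Step.D]) := hwXT
  have hXHU : X.count Step.H = X.count Step.U + 1 := before_U hw hXepre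
  have hXUD : X.count Step.U = X.count Step.D := hQm
  have hnlen : n = m + 1 + C.length + 1 := by
    have := congrArg List.length hwdec
    simp [← hn, hXlen] at this
    omega
  -- C is an S-Motzkin path
  have hwH := hw.1
  have hwUD := hw.2.1
  rw [hwdec] at hwH hwUD
  simp [List.count_append, List.count_cons, List.count_singleton] at hwH hwUD
  have hCsmp : SMP C := by
    refine ⟨by omega, by omega, fun p hp => ?_⟩
    obtain ⟨r, hr⟩ := hp
    have hppre : X ++ Step.U :: p <+: w := ⟨r ++ [Step.D], by rw [hwdec, ← hr]; simp⟩
    have hcond := hw.2.2 _ hppre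
    simp [List.count_append, List.count_cons] at hcond
    -- condition (a) from maximality
    have hi : ¬ Q (m + 1 + p.length) := by
      apply hmax _ (by omega)
      have : p.length ≤ C.length := by
        have := congrArg List.length hr
        simp at this
        omega
      omega
    have hieq : w.take (m + 1 + p.length) = X ++ Step.U :: p := by
      have h1 := htake _ hppre
      simp [hXlen] at h1
      rw [show m + 1 + p.length = m + (p.length + 1) from by omega]
      exact h1.symm
    have hi2 : ¬ ((w.take (m + 1 + p.length)).count Step.U =
        (w.take (m + 1 + p.length)).count Step.D) := hi
    rw [hieq] at hi2
    simp [List.count_append, List.count_cons] at hi2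
    have hDU : p.count Step.D ≤ p.count Step.U := by omega
    exact ⟨hDU, by omega, by omega⟩
  -- strip trailing D's from X
  obtain ⟨Y', j, hXY, hY'⟩ := strip_D X
  have hY'ne : Y' ≠ [] := by
    intro h
    rw [h] at hXY
    simp at hXY
    rw [hXY] at hXHU
    simp [List.count_replicate] at hXHU
  obtain ⟨Y, y, hYy⟩ : ∃ Y y, Y' = Y ++ [y] := by
    rcases List.eq_nil_or_concat Y' with h | ⟨L, b, h⟩
    · exact absurd h hY'ne
    · exact ⟨L, b, by rw [h, List.concat_eq_append]⟩
  rw [hYy] at hXY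
  have hyH : y = Step.H := by
    cases y with
    | H => rfl
    | D => exact absurd hYy (hY' Y)
    | U =>
      exfalso
      have hYUpre : Y ++ [Step.U] <+: w :=
        List.IsPrefix.trans ⟨List.replicate j Step.D, hXY.symm⟩ hXpre
      have hbu := before_U hw hYUpre
      rw [hXY] at hXHU
      simp [List.count_append, List.count_cons, List.count_replicate] at hXHU
      omega
  subst hyH
  have hXdec : X = Y ++ Step.H :: List.replicate j Step.D := by
    rw [hXY]; simp
  have hYpre : Y <+: w := List.IsPrefix.trans
    (⟨Step.H :: List.replicate j Step.D, hXdec.symm⟩ : Y <+: X) hXpre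
  have hYH : Y.count Step.H = Y.count Step.U := by
    rw [hXdec] at hXHU
    simp [List.count_append, List.count_cons, List.count_replicate] at hXHU
    omega
  have hYUD : Y.count Step.U = Y.count Step.D + j := by
    rw [hXdec] at hXUD
    simp [List.count_append, List.count_cons, List.count_replicate] at hXUD
    omega
  -- split Y into B₁ and A
  obtain ⟨B₁, A, hYsplit, hend, hB₁UD, hB₁H, hApref⟩ :
      ∃ B₁ A, Y = B₁ ++ A ∧ (B₁.getLast? = some Step.U ∨ B₁ = []) ∧
        B₁.count Step.U = B₁.count Step.D + j ∧ B₁.count Step.H = B₁.count Step.U ∧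
        ∀ p, p <+: A → p.count Step.D ≤ p.count Step.U := by
    rcases Nat.eq_zero_or_pos j with hj0 | hjpos
    · refine ⟨[], Y, by simp, Or.inr rfl, by simp [hj0], by simp, fun p hp => ?_⟩
      exact (hw.2.2 p (hp.trans hYpre)).1
    · -- find the last position where count U < count D + j
      set R : ℕ → Prop := fun i => (Y.take i).count Step.U < (Y.take i).count Step.D + j
        with hRdef
      have hR0 : R 0 := by simp [hRdef]; omega
      set i₀ := Nat.findGreatest R Y.length with hi₀
      have hRi₀ : R i₀ := Nat.findGreatest_spec (Nat.zero_le _) hR0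
      have hi₀le : i₀ ≤ Y.length := Nat.findGreatest_le _
      have hRmax : ∀ i, i₀ < i → i ≤ Y.length → ¬ R i := fun i h1 h2 =>
        Nat.findGreatest_is_greatest h1 h2
      have hi₀lt : i₀ < Y.length := by
        rcases Nat.lt_or_ge i₀ Y.length with h | h
        · exact h
        · exfalso
          have : i₀ = Y.length := by omega
          rw [hRdef] at hRi₀
          rw [this] at hRi₀
          simp at hRi₀
          omega
      -- step at i₀ in Y is U
      have hYdropne : Y.drop i₀ ≠ [] := by
        rw [← List.length_pos_iff_ne_nil, List.length_drop]; omega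
      obtain ⟨e', T₀, hT₀⟩ : ∃ e' T₀, Y.drop i₀ = e' :: T₀ := by
        cases hd : Y.drop i₀ with
        | nil => exact absurd hd hYdropne
        | cons e' T₀ => exact ⟨e', T₀, rfl⟩
      have hYT : Y = Y.take i₀ ++ e' :: T₀ := by rw [← hT₀, List.take_append_drop]
      have htakei₀ : (Y.take i₀).length = i₀ := by rw [List.length_take]; omega
      have htake1 : Y.take (i₀ + 1) = Y.take i₀ ++ [e'] := by
        have hpre : Y.take i₀ ++ [e'] <+: Y := ⟨T₀, by simpa using hYT.symm⟩
        have h1 := List.prefix_iff_eq_take.mp hpre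
        simp [htakei₀] at h1
        exact h1.symm
      have hnR1 : ¬ R (i₀ + 1) := hRmax _ (by omega) (by omega)
      simp only [hRdef] at hRi₀ hnR1
      rw [htake1] at hnR1
      simp [List.count_append, List.count_singleton] at hnR1
      have he'U : e' = Step.U := by
        cases e' with
        | H => exfalso; simp at hnR1; omega
        | D => exfalso; simp at hnR1; omega
        | U => rfl
      subst he'U
      simp at hnR1
      refine ⟨Y.take i₀ ++ [Step.U], T₀, by simpa using hYT, Or.inl (by simp), ?_, ?_, ?_⟩
      · simp [List.count_append, List.count_singleton]
        omega
      · have hpre : Y.take i₀ ++ [Step.U] <+: w := List.IsPrefix.trans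
          (⟨T₀, by simpa using hYT.symm⟩ : Y.take i₀ ++ [Step.U] <+: Y) hYpre
        exact end_U hw hpre
      · intro p hp
        obtain ⟨r, hr⟩ := hp
        have hi : ¬ R (i₀ + 1 + p.length) := by
          apply hRmax _ (by omega)
          have hlen := congrArg List.length hYT
          have hlenr := congrArg List.length hr
          simp [htakei₀] at hlen hlenr
          omega
        have hieq : Y.take (i₀ + 1 + p.length) = Y.take i₀ ++ Step.U :: p := by
          have hpre : Y.take i₀ ++ Step.U :: p <+: Y := by
            refine ⟨r, ?_⟩
            conv_rhs => rw [hYT, ← hr]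
            simp
          have h1 := List.prefix_iff_eq_take.mp hpre
          simp [htakei₀] at h1
          rw [show i₀ + 1 + p.length = i₀ + (p.length + 1) from by omega]
          exact h1.symm
        have hi2 : ¬ ((Y.take (i₀ + 1 + p.length)).count Step.U <
            (Y.take (i₀ + 1 + p.length)).count Step.D + j) := hi
        rw [hieq] at hi2
        simp [List.count_append, List.count_cons] at hi2
        omega
  -- A is an S-Motzkin path
  have hB₁pre : B₁ <+: w := List.IsPrefix.trans (⟨A, hYsplit.symm⟩ : B₁ <+: Y) hYpre
  have hYc : Y.count Step.H = B₁.count Step.H + A.count Step.H ∧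
      Y.count Step.U = B₁.count Step.U + A.count Step.U ∧
      Y.count Step.D = B₁.count Step.D + A.count Step.D := by
    rw [hYsplit]; simp [List.count_append]
  have hAsmp : SMP A := by
    refine ⟨by omega, by omega, fun p hp => ?_⟩
    refine ⟨hApref p hp, ?_, ?_⟩ <;>
    · obtain ⟨r, hr⟩ := hp
      have hppre : B₁ ++ p <+: w := List.IsPrefix.trans
        (⟨r, by rw [hYsplit, ← hr]; simp⟩ : B₁ ++ p <+: Y) hYpre
      have hcond := hw.2.2 _ hppre
      simp [List.count_append] at hcond
      omega
  -- B₁ ++ D^j is an S-Motzkin path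
  have hBsmp : SMP (B₁ ++ List.replicate j Step.D) := by
    refine ⟨?_, ?_, fun p hp => ?_⟩
    · simp [List.count_append, List.count_replicate]; omega
    · simp [List.count_append, List.count_replicate]; omega
    · rcases prefix_append_cases hp with h | ⟨r, hr, rfl⟩
      · exact hw.2.2 p (h.trans hB₁pre)
      · obtain ⟨hrrepl, hrlen⟩ := prefix_repl hr
        rw [hrrepl]
        simp [List.count_append, List.count_replicate]
        omega
  -- assemble the existence witness
  refine ⟨(A, B₁, List.replicate j Step.D, C), ⟨hAsmp, hCsmp, hBsmp, ?_, hend, ?_⟩, ?_⟩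
  · intro h
    have := List.eq_of_mem_replicate h
    simp at this
  · rw [hwdec, hXdec, hYsplit]
    simp [List.append_assoc]
  -- uniqueness
  rintro ⟨A', B₁', B₂', C'⟩ ⟨hA', hC', hB', hU', hend', hw'⟩
  simp only at hA' hC' hB' hU' hend' hw'
  -- B₂' is all D's
  have hB₁'H : B₁'.count Step.H = B₁'.count Step.U := by
    rcases hend' with h1 | h1
    · obtain ⟨r, hr⟩ := List.getLast?_eq_some_iff.mp h1
      have hpre : r ++ [Step.U] <+: w := by
        rw [← hr]
        exact ⟨A' ++ Step.H :: (B₂' ++ Step.U :: (C' ++ [Step.D])), by rw [hw']; simp⟩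
      rw [hr]
      exact end_U hw hpre
    · rw [h1]; simp
  have hA'H := hA'.1
  have hA'UD := hA'.2.1
  have hB₂'D : ∀ x ∈ B₂', x = Step.D := by
    intro x hx
    cases x with
    | D => rfl
    | U => exact absurd hx hU'
    | H =>
      exfalso
      obtain ⟨s, t, hst, hHs⟩ := first_split hx
      have hUs : Step.U ∉ s := fun h => hU' (by rw [hst]; simp [h])
      have hpre : B₁' ++ A' ++ Step.H :: (s ++ [Step.H]) <+: w := by
        refine ⟨t ++ Step.U :: (C' ++ [Step.D]), ?_⟩
        rw [hw', hst]
        simp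
      have hcond := (hw.2.2 _ hpre).2.2
      have hsH : s.count Step.H = 0 := List.count_eq_zero_of_not_mem hHs
      have hsU : s.count Step.U = 0 := List.count_eq_zero_of_not_mem hUs
      simp [List.count_append, List.count_cons, List.count_singleton, hsH, hsU] at hcond
      omega
  have hB₂'repl : B₂' = List.replicate B₂'.length Step.D :=
    List.eq_replicate_iff.mpr ⟨rfl, hB₂'D⟩
  set j' := B₂'.length with hj'
  -- the combined prefix X'
  set X' := B₁' ++ A' ++ Step.H :: B₂' with hX'def
  have hwdec' : w = X' ++ Step.U :: (C' ++ [Step.D]) := by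
    rw [hw', hX'def]; simp
  have hX'pre : X' <+: w := ⟨Step.U :: (C' ++ [Step.D]), hwdec'.symm⟩
  have hB'H := hB'.1
  have hB'UD := hB'.2.1
  rw [hB₂'repl] at hB'H hB'UD
  simp [List.count_append] at hB'H hB'UD
  have hX'UD : X'.count Step.U = X'.count Step.D := by
    rw [hX'def, hB₂'repl]
    simp [List.count_append, List.count_cons]
    omega
  have hX'lenn : X'.length + 1 + C'.length + 1 = n := by
    have := congrArg List.length hwdec'
    simp [← hn] at this
    omega
  -- X' = X
  have hX'len : X'.length = m := by
    rcases Nat.lt_trichotomy X'.length m with h | h | h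
    · exfalso
      have hXUpre : X' ++ [Step.U] <+: w := ⟨C' ++ [Step.D], by rw [hwdec']; simp⟩
      have hXUX : X' ++ [Step.U] <+: X :=
        List.prefix_of_prefix_length_le hXUpre hXpre (by simp [hXlen]; omega)
      obtain ⟨c, hc⟩ := hXUX
      obtain ⟨s, hs⟩ := hXpre
      rw [← hc] at hs
      rw [hwdec'] at hs
      simp only [List.append_assoc, List.cons_append, List.singleton_append] at hs
      have hcs : c ++ s = C' ++ [Step.D] := by
        have := List.append_cancel_left hs
        simpa using this
      have hcpre : c <+: C' ++ [Step.D] := ⟨s, hcs⟩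
      have hclen : X'.length + 1 + c.length = m := by
        have := congrArg List.length hc
        simp [hXlen] at this
        omega
      have hcC' : c <+: C' := by
        refine List.prefix_of_prefix_length_le hcpre (List.prefix_append C' [Step.D]) ?_
        omega
      have hcDU := (hC'.2.2 c hcC').1
      have hXc : X.count Step.U = X'.count Step.U + 1 + c.count Step.U ∧
          X.count Step.D = X'.count Step.D + c.count Step.D := by
        rw [← hc]
        constructor <;> (simp [List.count_append, List.count_cons, List.count_nil]; try omega)
      omega
    · exact h
    · exfalso
      have hQX' : Q X'.length := by
        show (w.take X'.length).count Step.U = (w.take X'.length).count Step.D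
        rw [← htake _ hX'pre]
        exact hX'UD
      exact hmax _ h (by omega) hQX'
  have hX'X : X' = X :=
    List.IsPrefix.eq_of_length (List.prefix_of_prefix_length_le hX'pre hXpre (by omega))
      (by rw [hX'len, hXlen])
  -- C' = C
  have hC'C : C' = C := by
    have h1 : X' ++ Step.U :: (C' ++ [Step.D]) = X' ++ Step.U :: (C ++ [Step.D]) := by
      rw [← hwdec', hX'X, ← hwdec]
    have h2 := List.append_cancel_left h1
    simp at h2
    exact h2
  -- Y split equality
  have hX'Y : (B₁' ++ A') ++ Step.H :: List.replicate j' Step.D =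
      Y ++ Step.H :: List.replicate j Step.D := by
    have : X' = (B₁' ++ A') ++ Step.H :: B₂' := by rw [hX'def]
    rw [← hB₂'repl, ← this, hX'X, hXdec]
  have hrevform : ∀ (Z : List Step) (k : ℕ),
      (Z ++ Step.H :: List.replicate k Step.D).reverse =
        List.replicate k Step.D ++ Step.H :: Z.reverse := by
    intro Z k
    rw [List.reverse_append, List.reverse_cons, List.reverse_replicate]
    simp
  have hrc : List.replicate j' Step.D ++ Step.H :: (B₁' ++ A').reverse =
      List.replicate j Step.D ++ Step.H :: Y.reverse := by
    rw [← hrevform, ← hrevform, hX'Y]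
  obtain ⟨hjj, hrev⟩ := repl_cancel _ _ _ _ hrc
  have hYeq : B₁' ++ A' = Y := by
    have := congrArg List.reverse hrev
    simpa using this
  -- uniqueness of the (B₁, A) split
  have l1 : B₁'.length ≤ B₁.length := Ysplit_le hYsplit hYeq.symm hAsmp hA' hend'
  have l2 : B₁.length ≤ B₁'.length := Ysplit_le hYeq.symm hYsplit hA' hAsmp hend
  have hB₁eq : B₁' = B₁ := by
    refine List.IsPrefix.eq_of_length
      (List.prefix_of_prefix_length_le ⟨A', hYeq⟩ ⟨A, hYsplit.symm⟩ l1) (by omega)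
  have hAeq : A' = A := by
    rw [hB₁eq] at hYeq
    rw [hYsplit] at hYeq
    exact List.append_cancel_left hYeq
  have hB₂eq : B₂' = List.replicate j Step.D := by
    rw [hB₂'repl, hjj]
  simp only [Prod.mk.injEq]
  exact ⟨hAeq, hB₁eq, hB₂eq, hC'C⟩
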